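/- arXiv:2209.01443 — 4 statements merged into one kernel-verified Lean document; each statement's English description precedes it below -/
import Mathlib

section
/- The 6×6 boat–star substitution matrix M = [[1,1,1,0,0,0],[5,3,1,0,0,0],[0,0,0,2,1,0],[5,3,1,4,2,0],[0,0,0,1,3,5],[0,0,0,1,1,1]] has characteristic polynomial with roots exactly φ⁴, 4, 1, φ⁻⁴, 0, 0, where φ = (1+√5)/2 is the golden ratio. -/
open Real

noncomputable def boatStarM : Matrix (Fin 6) (Fin 6) ℝ :=
  !![1,1,1,0,0,0;
     5,3,1,0,0,0;
     0,0,0,2,1,0;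
     5,3,1,4,2,0;
     0,0,0,1,3,5;
     0,0,0,1,1,1]

noncomputable def goldenφ : ℝ := (1 + Real.sqrt 5) / 2

/-!
The characteristic polynomial of the boat–star matrix factors as
`X² (X - 1) (X - 4) (X² - 7X + 1)`. The quadratic factor is `(X - t)(X - t⁻¹)` with
`t + t⁻¹ = 7`, and `t = φ⁴` solves this: `φ⁻¹ = -ψ` for the Galois conjugate `ψ` of `φ`,
and `φ⁴ + ψ⁴ = 7` is the fourth Lucas number.
-/

open Polynomial goldenRatio

theorem boatStarM_charpoly :
    boatStarM.charpoly = X ^ 2 * (X - 1) * (X - 4) * (X ^ 2 - 7 * X + 1) := by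
  have hcharmatrix : boatStarM.charmatrix = !![X - 1, -1, -1, 0, 0, 0;
      -5, X - 3, -1, 0, 0, 0;
      0, 0, X, -2, -1, 0;
      -5, -3, -1, X - 4, -2, 0;
      0, 0, 0, -1, X - 3, -5;
      0, 0, 0, -1, -1, X - 1] := by
    ext i j
    fin_cases i <;> fin_cases j <;> simp [boatStarM, map_ofNat]
  rw [Matrix.charpoly, hcharmatrix]
  simp [Matrix.det_succ_row_zero, Fin.sum_univ_succ, Fin.succAbove]
  ring

theorem goldenφ_eq_goldenRatio : goldenφ = φ := rfl

theorem Polynomial.X_sub_C_mul_X_sub_C_inv {K : Type*} [Field K] {t : K} (ht : t ≠ 0) :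
    (X - C t) * (X - C t⁻¹) = X ^ 2 - C (t + t⁻¹) * X + 1 := by
  rw [C_add, ← C_1, ← mul_inv_cancel₀ ht, C_mul]
  ring

theorem Real.goldenRatio_pow_four_add_inv : φ ^ 4 + (φ ^ 4)⁻¹ = 7 := by
  rw [← inv_pow, inv_goldenRatio]
  linear_combination (φ ^ 2 + φ + 2) * goldenRatio_sq + (ψ ^ 2 + ψ + 2) * goldenConj_sq +
    3 * goldenRatio_add_goldenConj

theorem boatStar_charpoly_roots :
    (Matrix.charpoly boatStarM).roots =
      {goldenφ ^ 4, 4, 1, (goldenφ ^ 4)⁻¹, 0, 0} := by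
  have hquadratic : (X - C (φ ^ 4)) * (X - C (φ ^ 4)⁻¹) = X ^ 2 - 7 * X + 1 := by
    rw [X_sub_C_mul_X_sub_C_inv (pow_ne_zero 4 goldenRatio_ne_zero),
      goldenRatio_pow_four_add_inv, map_ofNat]
  have hsplit : boatStarM.charpoly =
      (({φ ^ 4, 4, 1, (φ ^ 4)⁻¹, 0, 0} : Multiset ℝ).map fun a => X - C a).prod := by
    simp only [Multiset.insert_eq_cons, Multiset.map_cons, Multiset.map_singleton,
      Multiset.prod_cons, Multiset.prod_singleton, map_ofNat, C_1, C_0, sub_zero]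
    rw [boatStarM_charpoly, ← hquadratic]
    ring
  rw [goldenφ_eq_goldenRatio, hsplit, roots_multiset_prod_X_sub_C]
end

section
/- Let M be the boat–star substitution matrix. The vector v₁ = (1/2)·(3−√5, −5+3√5, 5−√5, 5+√5, 2√5, 2)ᵀ satisfies M v₁ = φ⁴ v₁, where φ = (1+√5)/2. -/
open Real

noncomputable def v₁ : Fin 6 → ℝ :=
  ![(3 - Real.sqrt 5) / 2, (-5 + 3 * Real.sqrt 5) / 2, (5 - Real.sqrt 5) / 2,
    (5 + Real.sqrt 5) / 2, (2 * Real.sqrt 5) / 2, 2 / 2]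

theorem goldenφ_sq : goldenφ ^ 2 = goldenφ + 1 :=
  goldenRatio_sq

theorem goldenφ_pow_four : goldenφ ^ 4 = (7 + 3 * √5) / 2 := by
  have hφ4 : goldenφ ^ 4 = 3 * goldenφ + 2 := by
    linear_combination (goldenφ ^ 2 + goldenφ + 2) * goldenφ_sq
  rw [hφ4, goldenφ]
  ring

theorem boatStar_v1_eigen :
    boatStarM.mulVec v₁ = goldenφ ^ 4 • v₁ := by
  rw [goldenφ_pow_four]
  ext i
  fin_cases i <;>
    simp [boatStarM, v₁, Matrix.mulVec, dotProduct, Fin.sum_univ_six] <;>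
    grind
end

section
/- For every n ≥ 0, the number of pentagon tiles in the n-th boat–star supertile generated from a single star equals (17+7√5)/22 · φ^{4n} − (40/33)·4ⁿ − 1/3 + (17−7√5)/22 · φ^{−4n}. Formally: with M the boat–star substitution matrix, u = (0,0,0,1,1,1)ᵀ, and e₁ the first standard basis vector, ⟨u, Mⁿ e₁⟩ equals the stated expression for all n ∈ ℕ. -/
open Real Matrix

/-!
The vectors `Mᵏ e₀` span a 4-dimensional subspace on which `M` is annihilated by
`X⁴ - 12X³ + 40X² - 33X + 4 = (X - 4)(X - 1)(X² - 7X + 1)`, so the pentagon count satisfies the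
corresponding linear recurrence. Its solutions are the combinations of `4ⁿ`, `1`, `φ⁴ⁿ` and
`ψ⁴ⁿ = φ⁻⁴ⁿ` (the roots of `X² - 7X + 1` being `φ⁴` and `ψ⁴`), and the closed form is the one
that matches the first four counts `0, 5, 50, 400`.
-/

open Polynomial goldenRatio

theorem LinearRecurrence.isSolution_dotProduct_pow_mulVec {R ι : Type*} [CommSemiring R]
    [Fintype ι] [DecidableEq ι] (E : LinearRecurrence R) (A : Matrix ι ι R) (u v : ι → R)
    (h : A ^ E.order *ᵥ v = ∑ i, E.coeffs i • (A ^ (i : ℕ) *ᵥ v)) :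
    E.IsSolution fun n => u ⬝ᵥ (A ^ n *ᵥ v) := by
  intro n
  simp only [pow_add, ← mulVec_mulVec, h, mulVec_sum, dotProduct_sum, mulVec_smul,
    dotProduct_smul, smul_eq_mul]

theorem pow_four_sq_sub_seven_mul_add_one {R : Type*} [CommRing R] {x : R}
    (hx : x ^ 2 = x + 1) : (x ^ 4) ^ 2 - 7 * x ^ 4 + 1 = 0 := by
  linear_combination (x ^ 2 + x - 1) * (x ^ 4 + 3 * x ^ 2 + 1) * hx

theorem goldenRatio_pow_four : φ ^ 4 = (7 + 3 * √5) / 2 := by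
  rw [goldenRatio]
  linear_combination (√5 ^ 2 + 4 * √5 + 11) / 16 * Real.sq_sqrt (show (0 : ℝ) ≤ 5 by norm_num)

theorem goldenConj_pow_four : ψ ^ 4 = (7 - 3 * √5) / 2 := by
  rw [goldenConj]
  linear_combination (√5 ^ 2 - 4 * √5 + 11) / 16 * Real.sq_sqrt (show (0 : ℝ) ≤ 5 by norm_num)

theorem boatStarM_mulVec (x : Fin 6 → ℝ) :
    boatStarM *ᵥ x = ![x 0 + x 1 + x 2, 5 * x 0 + 3 * x 1 + x 2, 2 * x 3 + x 4,
      5 * x 0 + 3 * x 1 + x 2 + 4 * x 3 + 2 * x 4, x 3 + 3 * x 4 + 5 * x 5, x 3 + x 4 + x 5] := by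
  ext i
  fin_cases i <;> simp [boatStarM, mulVec, dotProduct, Fin.sum_univ_six]

def boatStarRecurrence : LinearRecurrence ℝ := ⟨4, ![-4, 33, -40, 12]⟩

theorem boatStarRecurrence_charPoly :
    boatStarRecurrence.charPoly = (X - 4) * (X - 1) * (X ^ 2 - 7 * X + 1) := by
  rw [boatStarRecurrence, LinearRecurrence.charPoly]
  simp [Fin.sum_univ_four, ← C_mul_X_pow_eq_monomial]
  simp only [C_ofNat]
  ring

theorem geom_mem_boatStarRecurrence_solSpace {q : ℝ}
    (hq : q = 4 ∨ q = 1 ∨ q ^ 2 - 7 * q + 1 = 0) :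
    (q ^ ·) ∈ boatStarRecurrence.solSpace := by
  rw [← LinearRecurrence.is_sol_iff_mem_solSpace, LinearRecurrence.geom_sol_iff_root_charPoly,
    boatStarRecurrence_charPoly]
  simpa [sub_eq_zero, or_assoc] using hq

theorem boatStarRecurrence_isSolution_pentagonCount :
    boatStarRecurrence.IsSolution fun n => (![0, 0, 0, 1, 1, 1] : Fin 6 → ℝ) ⬝ᵥ
      (boatStarM ^ n).mulVec (fun i => if i = 0 then (1 : ℝ) else 0) := by
  apply LinearRecurrence.isSolution_dotProduct_pow_mulVec
  rw [boatStarRecurrence]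
  simp [Fin.sum_univ_four, pow_succ', ← mulVec_mulVec, boatStarM_mulVec, vecHead, vecTail]
  norm_num

theorem boatStarRecurrence_isSolution_closedForm :
    boatStarRecurrence.IsSolution fun n => (17 + 7 * √5) / 22 * (φ ^ 4) ^ n - 40 / 33 * 4 ^ n
      - 1 / 3 + (17 - 7 * √5) / 22 * (ψ ^ 4) ^ n := by
  set S := boatStarRecurrence.solSpace
  have hφ : (fun n => (φ ^ 4) ^ n) ∈ S := geom_mem_boatStarRecurrence_solSpace
    (.inr (.inr (pow_four_sq_sub_seven_mul_add_one goldenRatio_sq)))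
  have hψ : (fun n => (ψ ^ 4) ^ n) ∈ S := geom_mem_boatStarRecurrence_solSpace
    (.inr (.inr (pow_four_sq_sub_seven_mul_add_one goldenConj_sq)))
  have h4 : (fun n => (4 : ℝ) ^ n) ∈ S := geom_mem_boatStarRecurrence_solSpace (.inl rfl)
  have h1 : (fun n => (1 : ℝ) ^ n) ∈ S := geom_mem_boatStarRecurrence_solSpace (.inr (.inl rfl))
  rw [LinearRecurrence.is_sol_iff_mem_solSpace]
  convert S.add_mem (S.sub_mem (S.sub_mem (S.smul_mem ((17 + 7 * √5) / 22) hφ)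
    (S.smul_mem (40 / 33) h4)) (S.smul_mem (1 / 3) h1)) (S.smul_mem ((17 - 7 * √5) / 22) hψ)
    using 1
  ext n
  simp

theorem pentagonCount_eq_closedForm :
    (fun n => (![0, 0, 0, 1, 1, 1] : Fin 6 → ℝ) ⬝ᵥ
        (boatStarM ^ n).mulVec (fun i => if i = 0 then (1 : ℝ) else 0)) =
      fun n => (17 + 7 * √5) / 22 * (φ ^ 4) ^ n - 40 / 33 * 4 ^ n - 1 / 3
        + (17 - 7 * √5) / 22 * (ψ ^ 4) ^ n := by
  rw [boatStarRecurrence.eq_iff_eqOn_range_order _ _ boatStarRecurrence_isSolution_pentagonCount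
    boatStarRecurrence_isSolution_closedForm]
  have h2 : √5 ^ 2 = 5 := Real.sq_sqrt (by norm_num)
  have h4 : √5 ^ 4 = 25 := by linear_combination (√5 ^ 2 + 5) * h2
  intro n hn
  simp only [boatStarRecurrence, Finset.coe_range, Set.mem_Iio] at hn
  simp only [goldenRatio_pow_four, goldenConj_pow_four]
  interval_cases n <;> simp [pow_succ', ← mulVec_mulVec, boatStarM_mulVec, vecHead, vecTail] <;>
    ring_nf <;> norm_num [h2, h4]

theorem boatStar_pentagon_count (n : ℕ) :
    (![0, 0, 0, 1, 1, 1] : Fin 6 → ℝ) ⬝ᵥ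
        (boatStarM ^ n).mulVec (fun i => if i = 0 then (1 : ℝ) else 0) =
      (17 + 7 * Real.sqrt 5) / 22 * goldenφ ^ (4 * n)
        - 40 / 33 * 4 ^ n - 1 / 3
        + (17 - 7 * Real.sqrt 5) / 22 * (goldenφ ^ (4 * n))⁻¹ := by
  have hφ : goldenφ ^ (4 * n) = (φ ^ 4) ^ n := pow_mul φ 4 n
  have hψ : (goldenφ ^ (4 * n))⁻¹ = (ψ ^ 4) ^ n := by
    rw [hφ, ← inv_pow, ← inv_pow, inv_goldenRatio, Even.neg_pow (by decide)]
  rw [hψ, hφ]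
  exact congrFun pentagonCount_eq_closedForm n
end

section
/- Let Γ = (V, E) be a (possibly infinite, locally finite) graph with Laplacian Δ, let P ⊆ V be finite, and let ψ: V → ℝ be supported in P with Δψ = Eψ. Suppose every vertex u ∉ P adjacent to P satisfies Σ_{w∈P, w~u} ψ(w) = 0. If V₀ ⊆ V is any finite subset containing P together with all vertices adjacent to P, then E is an eigenvalue of the Laplacian Δ₀ of the induced subgraph on V₀, with eigenvector the restriction of ψ to V₀. -/
/-!
At a vertex of `P` every neighbour lies in `V₀`, so `Δ₀ψ` and `Δψ` agree there. Off `P`, `ψ`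
vanishes and `Δ₀ψ(u) = -∑_{w ∈ P, w ~ u} ψ(w)`, which is zero by the boundary condition
(vacuously if `u` has no neighbour in `P`).
-/

open Finset

lemma Finset.restrict_ne_zero_of_support_subset {α M : Type*} [Zero M] {f : α → M}
    {t : Finset α} (hf : f ≠ 0) (ht : Function.support f ⊆ t) : (fun x : t => f x) ≠ 0 := by
  obtain ⟨x, hx⟩ := Function.ne_iff.mp hf
  exact fun h => hx (congrFun h ⟨x, ht hx⟩)

namespace SimpleGraph

variable {V : Type*} (G : SimpleGraph V) [G.LocallyFinite]

lemma neighborFinset_inter_eq_empty [DecidableEq V] {P : Finset V} {v : V}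
    (h : ¬∃ w ∈ P, G.Adj v w) : G.neighborFinset v ∩ P = ∅ := by
  rw [← disjoint_iff_inter_eq_empty, Finset.disjoint_left]
  exact fun w hw hwP => h ⟨w, hwP, (G.mem_neighborFinset v w).mp hw⟩

variable [DecidableRel G.Adj]

lemma filter_adj_eq_neighborFinset {V₀ : Finset V} {v : V} (h : ∀ u, G.Adj v u → u ∈ V₀) :
    V₀.filter (G.Adj v) = G.neighborFinset v := by
  ext u
  simp only [mem_filter, mem_neighborFinset]
  exact ⟨And.right, fun hvu => ⟨h u hvu, hvu⟩⟩

lemma sum_filter_adj_eq_sum_neighborFinset_inter [DecidableEq V] {M : Type*} [AddCommMonoid M]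
    {P V₀ : Finset V} (hPV₀ : P ⊆ V₀) {f : V → M} (hf : ∀ u, u ∉ P → f u = 0) (v : V) :
    ∑ u ∈ V₀.filter (G.Adj v), f u = ∑ u ∈ G.neighborFinset v ∩ P, f u := by
  refine (sum_subset (fun u hu => ?_) fun u hu huP => hf u fun h => huP ?_).symm
  · rw [mem_inter, mem_neighborFinset] at hu
    exact mem_filter.mpr ⟨hPV₀ hu.2, hu.1⟩
  · exact mem_inter.mpr ⟨(G.mem_neighborFinset v u).mpr (mem_filter.mp hu).2, h⟩

end SimpleGraph

/-- A locally-supported Laplacian eigenfunction on an infinite locally finite graph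
restricts to an eigenvector of the Laplacian of the induced subgraph on any finite
vertex set containing the support together with all of its neighbors. -/
theorem locally_supported_eigenfunction_descends
    {V : Type*} [DecidableEq V] (G : SimpleGraph V) [DecidableRel G.Adj] [G.LocallyFinite]
    (P : Finset V) (ψ : V → ℝ) (E : ℝ)
    (hψ : ψ ≠ 0)
    (hsupp : ∀ v, v ∉ P → ψ v = 0)
    (heig : ∀ v, ((G.degree v : ℝ)) * ψ v - ∑ u ∈ G.neighborFinset v, ψ u = E * ψ v)
    (hbdry : ∀ u, u ∉ P → (∃ w ∈ P, G.Adj u w) →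
      ∑ w ∈ G.neighborFinset u ∩ P, ψ w = 0)
    (V₀ : Finset V) (hPV₀ : P ⊆ V₀)
    (hnbr : ∀ u v, v ∈ P → G.Adj u v → u ∈ V₀) :
    (fun v : {x // x ∈ V₀} => ψ v) ≠ 0 ∧
      ∀ v : {x // x ∈ V₀},
        ((V₀.filter (fun u => G.Adj (v : V) u)).card : ℝ) * ψ v
            - ∑ u ∈ V₀.filter (fun u => G.Adj (v : V) u), ψ u
          = E * ψ v := by
  refine ⟨restrict_ne_zero_of_support_subset hψ fun v hv => hPV₀ ?_, fun ⟨v, _⟩ => ?_⟩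
  · exact not_imp_comm.mp (hsupp v) hv
  by_cases hvP : v ∈ P
  · rw [G.filter_adj_eq_neighborFinset fun u hvu => hnbr u v hvP hvu.symm,
      G.card_neighborFinset_eq_degree]
    exact heig v
  · rw [hsupp v hvP, mul_zero, mul_zero, zero_sub, neg_eq_zero,
      G.sum_filter_adj_eq_sum_neighborFinset_inter hPV₀ hsupp]
    by_cases hex : ∃ w ∈ P, G.Adj v w
    · exact hbdry v hvP hex
    · rw [G.neighborFinset_inter_eq_empty hex, sum_empty]
end
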